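/- For d = 1 with p even and q odd (p ≥ 2, q ≥ 1), ρ = (p+q−2)/2, the function y ↦ Γ((y+ρ)/2)Γ((ρ−y)/2)/(Γ(y)Γ(−y)·sin(π(y+p−ρ)/2)·sin(π(y+q−ρ)/2)) has, on the ray y > 0: simple poles at y ∈ (ρ+2ℤ) ∩ (0,ρ), simple poles at y ∈ (ρ+2ℤ+1) ∩ (0,∞), and poles of order exactly two at y ∈ ρ + 2ℕ. -/

import Mathlib

open Filter

/-- The meromorphically continued Plancherel density for `d = 1`
(real hyperbolic space `O(p,q)/(O(1)×O(p-1,q))`), evaluated at `ν = -iy`. -/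
noncomputable def plancherelDensityReal (p q : ℕ) (ρ : ℝ) (σ : ℂ) : ℂ :=
  Complex.Gamma ((σ + ρ) / 2) * Complex.Gamma (((ρ : ℂ) - σ) / 2) /
    (Complex.Gamma σ * Complex.Gamma (-σ) *
      Complex.sin ((Real.pi : ℂ) * (σ + (p : ℂ) - ρ) / 2) *
      Complex.sin ((Real.pi : ℂ) * (σ + (q : ℂ) - ρ) / 2))

/-!
Since `p + q` is odd, `ρ ∈ ℤ + 1/2`, so every point `y ∈ ρ + ℤ` is a half-integer: `Γ(y)` and
`Γ(-y)` are finite and nonzero there, and so is `Γ((y + ρ)/2)` because `y + ρ > 0`.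
Of the two sines, `sin(π(σ + p - ρ)/2)` has a simple zero at `y ∈ ρ + 2ℤ` and
`sin(π(σ + q - ρ)/2)` one at `y ∈ ρ + 2ℤ + 1`, never both at once. Finally `Γ((ρ - σ)/2)` has a
pole exactly at `y ∈ ρ + 2ℕ`; the reflection formula turns it into a third simple zero
`sin(π(ρ - σ)/2)` of the denominator. The order of the pole is the number of these simple zeros.
-/

open Complex Topology
open scoped Real

theorem AnalyticAt.dslope {f : ℂ → ℂ} {y : ℂ} (hf : AnalyticAt ℂ f y) :
    AnalyticAt ℂ (dslope f y) y := by
  obtain ⟨p, hp⟩ := hf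
  exact ⟨p.fslope, hp.has_fpower_series_dslope_fslope⟩

@[fun_prop]
theorem AnalyticAt.cGamma {f : ℂ → ℂ} {y : ℂ} (hf : AnalyticAt ℂ f y)
    (h : ∀ m : ℕ, f y ≠ -m) : AnalyticAt ℂ (fun σ => Gamma (f σ)) y := by
  have hinv : AnalyticAt ℂ (fun s => (Gamma s)⁻¹) (f y) :=
    differentiable_one_div_Gamma.analyticAt _
  simpa only [Function.comp_def, Pi.inv_apply, inv_inv] using
    (hinv.inv (inv_ne_zero (Gamma_ne_zero h))).comp hf

theorem analyticOrderAt_sin_comp_eq_one {u : ℂ → ℂ} {y : ℂ} (hu : AnalyticAt ℂ u y)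
    (hu' : deriv u y ≠ 0) (h0 : sin (u y) = 0) :
    analyticOrderAt (fun σ => sin (u σ)) y = 1 := by
  have hcos : cos (u y) ≠ 0 := fun h => by simpa [h0, h] using sin_sq_add_cos_sq (u y)
  refine (analyticAt_sin.fun_comp hu).analyticOrderAt_eq_one_of_zero_deriv_ne_zero h0 ?_
  rw [deriv_csin hu.differentiableAt]
  exact mul_ne_zero hcos hu'

theorem AnalyticAt.exists_div_eq_div_sub_pow {N D : ℂ → ℂ} {y : ℂ} {n : ℕ}
    (hN : AnalyticAt ℂ N y) (hN0 : N y ≠ 0) (hD : AnalyticAt ℂ D y)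
    (hDn : analyticOrderAt D y = n) :
    ∃ h : ℂ → ℂ, AnalyticAt ℂ h y ∧ h y ≠ 0 ∧
      ∀ᶠ σ in 𝓝 y, N σ / D σ = h σ / (σ - y) ^ n := by
  obtain ⟨g, hg, hg0, hDg⟩ := hD.analyticOrderAt_eq_natCast.mp hDn
  refine ⟨fun σ => N σ / g σ, hN.div hg hg0, div_ne_zero hN0 hg0, ?_⟩
  filter_upwards [hDg] with σ hσ
  rw [hσ, smul_eq_mul, div_mul_eq_div_div_swap]

theorem div_sub_eq_div_sub_add_dslope {h : ℂ → ℂ} {y σ : ℂ} (hσ : σ ≠ y) :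
    h σ / (σ - y) = h y / (σ - y) + dslope h y σ := by
  have := sub_smul_dslope h y σ
  rw [smul_eq_mul] at this
  rw [← sub_eq_iff_eq_add', ← sub_div, ← this, mul_div_cancel_left₀ _ (sub_ne_zero.mpr hσ)]

theorem exists_simple_pole_of_eventuallyEq_div {f N D : ℂ → ℂ} {y : ℂ}
    (hN : AnalyticAt ℂ N y) (hN0 : N y ≠ 0) (hD : AnalyticAt ℂ D y)
    (hD1 : analyticOrderAt D y = 1) (hf : f =ᶠ[𝓝[≠] y] fun σ => N σ / D σ) :
    ∃ c : ℂ, c ≠ 0 ∧ ∃ g : ℂ → ℂ, AnalyticAt ℂ g y ∧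
      ∀ᶠ σ in 𝓝[≠] y, f σ = c / (σ - y) + g σ := by
  obtain ⟨h, hh, hh0, hND⟩ := hN.exists_div_eq_div_sub_pow hN0 hD (n := 1) hD1
  refine ⟨h y, hh0, dslope h y, hh.dslope, ?_⟩
  filter_upwards [hf, nhdsWithin_le_nhds hND, self_mem_nhdsWithin] with σ hfσ hNDσ hσ
  rw [hfσ, hNDσ, pow_one, div_sub_eq_div_sub_add_dslope hσ]

theorem exists_double_pole_of_eventuallyEq_div {f N D : ℂ → ℂ} {y : ℂ}
    (hN : AnalyticAt ℂ N y) (hN0 : N y ≠ 0) (hD : AnalyticAt ℂ D y)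
    (hD2 : analyticOrderAt D y = 2) (hf : f =ᶠ[𝓝[≠] y] fun σ => N σ / D σ) :
    ∃ c₂ c₁ : ℂ, c₂ ≠ 0 ∧ ∃ g : ℂ → ℂ, AnalyticAt ℂ g y ∧
      ∀ᶠ σ in 𝓝[≠] y, f σ = c₂ / (σ - y) ^ 2 + c₁ / (σ - y) + g σ := by
  obtain ⟨h, hh, hh0, hND⟩ := hN.exists_div_eq_div_sub_pow hN0 hD (n := 2) hD2
  refine ⟨h y, dslope h y y, hh0, dslope (dslope h y) y, hh.dslope.dslope, ?_⟩
  filter_upwards [hf, nhdsWithin_le_nhds hND, self_mem_nhdsWithin] with σ hfσ hNDσ hσ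
  rw [hfσ, hNDσ, pow_two, ← div_div, div_sub_eq_div_sub_add_dslope hσ, add_div, div_div,
    div_sub_eq_div_sub_add_dslope (h := dslope h y) hσ, add_assoc]

theorem intCast_div_two_ne_intCast {j : ℤ} (hj : Odd j) (m : ℤ) : (j : ℂ) / 2 ≠ m := by
  obtain ⟨i, rfl⟩ := hj
  intro h
  push_cast at h
  have h' : ((2 * i + 1 : ℤ) : ℂ) = ((2 * m : ℤ) : ℂ) := by push_cast; linear_combination 2 * h
  have := Int.cast_injective h'
  omega

theorem intCast_div_two_ne_neg_natCast {j : ℤ} (hj : Odd j) (m : ℕ) : (j : ℂ) / 2 ≠ -m := by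
  simpa using intCast_div_two_ne_intCast hj (-m)

theorem sin_pi_mul_intCast_div_two_eq_zero {j : ℤ} (hj : Even j) : sin (π * j / 2) = 0 := by
  obtain ⟨i, rfl⟩ := hj
  rw [show (π : ℂ) * ((i + i : ℤ) : ℂ) / 2 = i * π by push_cast; ring]
  exact sin_int_mul_pi i

theorem sin_pi_mul_intCast_div_two_ne_zero {j : ℤ} (hj : Odd j) : sin (π * j / 2) ≠ 0 := by
  rw [Ne, sin_eq_zero_iff]
  rintro ⟨m, hm⟩
  exact intCast_div_two_ne_intCast hj m
    (mul_left_cancel₀ (ofReal_ne_zero.2 Real.pi_ne_zero) (by linear_combination hm))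

theorem ne_neg_natCast_of_re_pos {s : ℂ} (hs : 0 < s.re) (m : ℕ) : s ≠ -m := by
  rintro rfl
  simp only [neg_re, natCast_re, Left.neg_pos_iff] at hs
  exact (Nat.cast_nonneg m).not_gt hs

theorem ofReal_add_ofReal_div_two_ne_neg_natCast {x y : ℝ} (h : 0 < x + y) (m : ℕ) :
    ((x : ℂ) + y) / 2 ≠ -m :=
  ne_neg_natCast_of_re_pos (by simp only [div_ofNat_re, add_re, ofReal_re]; linarith) m

theorem plancherelDensityReal_comm (p q : ℕ) (ρ : ℝ) :
    plancherelDensityReal p q ρ = plancherelDensityReal q p ρ := by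
  funext σ
  simp only [plancherelDensityReal]
  ring

theorem plancherelDensityReal_simple_pole {p q : ℕ} {ρ : ℝ} {y : ℂ}
    (h₁ : ∀ m : ℕ, (y + ρ) / 2 ≠ -m) (h₂ : ∀ m : ℕ, (ρ - y) / 2 ≠ -m) (hy : ∀ m : ℤ, y ≠ m)
    (hp : sin (π * (y + p - ρ) / 2) = 0) (hq : sin (π * (y + q - ρ) / 2) ≠ 0) :
    ∃ c : ℂ, c ≠ 0 ∧ ∃ g : ℂ → ℂ, AnalyticAt ℂ g y ∧
      ∀ᶠ σ in 𝓝[≠] y, plancherelDensityReal p q ρ σ = c / (σ - y) + g σ := by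
  have h₃ : ∀ m : ℕ, y ≠ -m := fun m => by simpa using hy (-m)
  have h₄ : ∀ m : ℕ, -y ≠ -m := fun m => by simpa using hy m
  have hden : Gamma y * Gamma (-y) * sin (π * (y + q - ρ) / 2) ≠ 0 :=
    mul_ne_zero (mul_ne_zero (Gamma_ne_zero h₃) (Gamma_ne_zero h₄)) hq
  refine exists_simple_pole_of_eventuallyEq_div
    (N := fun σ => Gamma ((σ + ρ) / 2) * Gamma ((ρ - σ) / 2) /
      (Gamma σ * Gamma (-σ) * sin (π * (σ + q - ρ) / 2)))
    (D := fun σ => sin (π * (σ + p - ρ) / 2)) (by fun_prop (disch := assumption))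
    (div_ne_zero (mul_ne_zero (Gamma_ne_zero h₁) (Gamma_ne_zero h₂)) hden) (by fun_prop)
    (analyticOrderAt_sin_comp_eq_one (by fun_prop) (by simp [Real.pi_ne_zero]) hp) ?_
  refine .of_forall fun σ => ?_
  simp only [plancherelDensityReal]
  ring

theorem plancherelDensityReal_double_pole {p q : ℕ} {ρ : ℝ} {y : ℂ} {k : ℕ}
    (h₁ : ∀ m : ℕ, (y + ρ) / 2 ≠ -m) (h₂ : (ρ - y) / 2 = -k) (hy : ∀ m : ℤ, y ≠ m)
    (hp : sin (π * (y + p - ρ) / 2) = 0) (hq : sin (π * (y + q - ρ) / 2) ≠ 0) :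
    ∃ c₂ c₁ : ℂ, c₂ ≠ 0 ∧ ∃ g : ℂ → ℂ, AnalyticAt ℂ g y ∧
      ∀ᶠ σ in 𝓝[≠] y, plancherelDensityReal p q ρ σ = c₂ / (σ - y) ^ 2 + c₁ / (σ - y) + g σ := by
  have h₃ : ∀ m : ℕ, y ≠ -m := fun m => by simpa using hy (-m)
  have h₄ : ∀ m : ℕ, -y ≠ -m := fun m => by simpa using hy m
  have h₅ : ∀ m : ℕ, 1 - (ρ - y) / 2 ≠ -m :=
    ne_neg_natCast_of_re_pos
      (by simp only [h₂, sub_neg_eq_add, add_re, one_re, natCast_re]; positivity)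
  have hden : Gamma (1 - (ρ - y) / 2) * Gamma y * Gamma (-y) * sin (π * (y + q - ρ) / 2) ≠ 0 :=
    mul_ne_zero (mul_ne_zero (mul_ne_zero (Gamma_ne_zero h₅) (Gamma_ne_zero h₃))
      (Gamma_ne_zero h₄)) hq
  have hD₁ : analyticOrderAt (fun σ => sin (π * (σ + p - ρ) / 2)) y = 1 :=
    analyticOrderAt_sin_comp_eq_one (by fun_prop) (by simp [Real.pi_ne_zero]) hp
  have hD₂ : analyticOrderAt (fun σ => sin (π * ((ρ - σ) / 2))) y = 1 :=
    analyticOrderAt_sin_comp_eq_one (by fun_prop) (by simp [Real.pi_ne_zero])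
      (by simpa [h₂, mul_comm] using sin_int_mul_pi k)
  have hΓ₅ : ∀ᶠ σ in 𝓝 y, Gamma (1 - (ρ - σ) / 2) ≠ 0 :=
    (by fun_prop (disch := assumption) : AnalyticAt ℂ (fun σ => Gamma (1 - (ρ - σ) / 2)) y)
      |>.continuousAt.eventually_ne (Gamma_ne_zero h₅)
  refine exists_double_pole_of_eventuallyEq_div
    (N := fun σ => π * Gamma ((σ + ρ) / 2) /
      (Gamma (1 - (ρ - σ) / 2) * Gamma σ * Gamma (-σ) * sin (π * (σ + q - ρ) / 2)))
    (D := fun σ => sin (π * (σ + p - ρ) / 2) * sin (π * ((ρ - σ) / 2)))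
    (by fun_prop (disch := assumption))
    (div_ne_zero (mul_ne_zero (ofReal_ne_zero.2 Real.pi_ne_zero) (Gamma_ne_zero h₁)) hden)
    (by fun_prop) ?_ ?_
  · rw [← Pi.mul_def, analyticOrderAt_mul (by fun_prop) (by fun_prop), hD₁, hD₂]
    rfl
  filter_upwards [nhdsWithin_le_nhds hΓ₅] with σ hσ
  have hreflect : Gamma ((ρ - σ) / 2) = π / sin (π * ((ρ - σ) / 2)) / Gamma (1 - (ρ - σ) / 2) :=
    eq_div_of_mul_eq hσ (Gamma_mul_Gamma_one_sub _)
  simp only [plancherelDensityReal, hreflect]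
  ring

theorem sin_pi_mul_ofReal_add_natCast_sub_div_two {ρ y : ℝ} {n : ℤ} (hy : y = ρ + n) (c : ℕ) :
    sin (π * (y + c - ρ) / 2) = sin (π * ((n + c : ℤ) : ℂ) / 2) := by
  rw [hy]
  push_cast
  ring_nf

theorem ofReal_ne_intCast_of_eq_add_intCast {p q : ℕ} {ρ y : ℝ} (hpq : Odd (p + q))
    (hρ : ρ = ((p : ℝ) + q - 2) / 2) {n : ℤ} (hy : y = ρ + n) (m : ℤ) : (y : ℂ) ≠ m := by
  have hy' : (y : ℂ) = ((p + q - 2 + 2 * n : ℤ) : ℂ) / 2 := by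
    rw [hy, hρ]
    push_cast
    ring
  have hodd := Nat.odd_iff.mp hpq
  rw [hy']
  exact intCast_div_two_ne_intCast (Int.odd_iff.mpr (by omega)) m

theorem plancherelDensityReal_simple_pole_of_lt {p q : ℕ} (hpe : Even p) (hqo : Odd q) {ρ y : ℝ}
    (hρ : ρ = ((p : ℝ) + q - 2) / 2) (hy : 0 < y) {k : ℤ} (hyk : y = ρ + 2 * k) (hyρ : y < ρ) :
    ∃ c : ℂ, c ≠ 0 ∧ ∃ g : ℂ → ℂ, AnalyticAt ℂ g (y : ℂ) ∧
      ∀ᶠ σ in 𝓝[≠] (y : ℂ), plancherelDensityReal p q ρ σ = c / (σ - y) + g σ := by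
  have hyn : y = ρ + ((2 * k : ℤ) : ℝ) := by rw [hyk]; push_cast; ring
  have hp2 := Nat.even_iff.mp hpe
  have hq2 := Nat.odd_iff.mp hqo
  refine plancherelDensityReal_simple_pole
    (ofReal_add_ofReal_div_two_ne_neg_natCast (by linarith))
    (ne_neg_natCast_of_re_pos (by simp only [div_ofNat_re, sub_re, ofReal_re]; linarith))
    (ofReal_ne_intCast_of_eq_add_intCast (Nat.odd_iff.mpr (by omega)) hρ hyn) ?_ ?_
  · rw [sin_pi_mul_ofReal_add_natCast_sub_div_two hyn]
    exact sin_pi_mul_intCast_div_two_eq_zero (Int.even_iff.mpr (by omega))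
  · rw [sin_pi_mul_ofReal_add_natCast_sub_div_two hyn]
    exact sin_pi_mul_intCast_div_two_ne_zero (Int.odd_iff.mpr (by omega))

theorem plancherelDensityReal_simple_pole_of_odd_shift {p q : ℕ} (hpe : Even p) (hqo : Odd q)
    {ρ y : ℝ} (hρ : ρ = ((p : ℝ) + q - 2) / 2) (hρ0 : 0 < ρ) (hy : 0 < y) {k : ℤ}
    (hyk : y = ρ + 2 * k + 1) :
    ∃ c : ℂ, c ≠ 0 ∧ ∃ g : ℂ → ℂ, AnalyticAt ℂ g (y : ℂ) ∧
      ∀ᶠ σ in 𝓝[≠] (y : ℂ), plancherelDensityReal p q ρ σ = c / (σ - y) + g σ := by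
  have hyn : y = ρ + ((2 * k + 1 : ℤ) : ℝ) := by rw [hyk]; push_cast; ring
  have hp2 := Nat.even_iff.mp hpe
  have hq2 := Nat.odd_iff.mp hqo
  have hρy : ((ρ : ℂ) - y) / 2 = ((-(2 * k + 1) : ℤ) : ℂ) / 2 := by rw [hyn]; push_cast; ring
  rw [plancherelDensityReal_comm]
  refine plancherelDensityReal_simple_pole
    (ofReal_add_ofReal_div_two_ne_neg_natCast (by linarith))
    (hρy ▸ intCast_div_two_ne_neg_natCast (Int.odd_iff.mpr (by omega)))
    (ofReal_ne_intCast_of_eq_add_intCast (Nat.odd_iff.mpr (by omega)) hρ hyn) ?_ ?_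
  · rw [sin_pi_mul_ofReal_add_natCast_sub_div_two hyn]
    exact sin_pi_mul_intCast_div_two_eq_zero (Int.even_iff.mpr (by omega))
  · rw [sin_pi_mul_ofReal_add_natCast_sub_div_two hyn]
    exact sin_pi_mul_intCast_div_two_ne_zero (Int.odd_iff.mpr (by omega))

theorem plancherelDensityReal_double_pole_of_even_shift {p q : ℕ} (hpe : Even p) (hqo : Odd q)
    {ρ y : ℝ} (hρ : ρ = ((p : ℝ) + q - 2) / 2) (hρ0 : 0 < ρ) (hy : 0 < y) {k : ℕ}
    (hyk : y = ρ + 2 * k) :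
    ∃ c₂ c₁ : ℂ, c₂ ≠ 0 ∧ ∃ g : ℂ → ℂ, AnalyticAt ℂ g (y : ℂ) ∧
      ∀ᶠ σ in 𝓝[≠] (y : ℂ),
        plancherelDensityReal p q ρ σ = c₂ / (σ - y) ^ 2 + c₁ / (σ - y) + g σ := by
  have hyn : y = ρ + ((2 * k : ℤ) : ℝ) := by rw [hyk]; push_cast; ring
  have hp2 := Nat.even_iff.mp hpe
  have hq2 := Nat.odd_iff.mp hqo
  refine plancherelDensityReal_double_pole (k := k)
    (ofReal_add_ofReal_div_two_ne_neg_natCast (by linarith))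
    (by rw [hyk]; push_cast; ring)
    (ofReal_ne_intCast_of_eq_add_intCast (Nat.odd_iff.mpr (by omega)) hρ hyn) ?_ ?_
  · rw [sin_pi_mul_ofReal_add_natCast_sub_div_two hyn]
    exact sin_pi_mul_intCast_div_two_eq_zero (Int.even_iff.mpr (by omega))
  · rw [sin_pi_mul_ofReal_add_natCast_sub_div_two hyn]
    exact sin_pi_mul_intCast_div_two_ne_zero (Int.odd_iff.mpr (by omega))

/-- For `d = 1` with `p` even and `q` odd, the Plancherel density has on the ray `y > 0`:
simple poles at `y ∈ (ρ+2ℤ) ∩ (0,ρ)`, simple poles at `y ∈ (ρ+2ℤ+1) ∩ (0,∞)`, and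
poles of order exactly two at `y ∈ ρ + 2ℕ`. -/
theorem plancherel_density_poles_p_even_q_odd
    (p q : ℕ) (hp : 2 ≤ p) (hq : 1 ≤ q) (hpe : Even p) (hqo : Odd q)
    (ρ : ℝ) (hρ : ρ = ((p : ℝ) + q - 2) / 2) (y : ℝ) (hy : 0 < y) :
    ((∃ k : ℤ, y = ρ + 2 * k) → y < ρ →
      ∃ c : ℂ, c ≠ 0 ∧ ∃ g : ℂ → ℂ, AnalyticAt ℂ g (y : ℂ) ∧
        ∀ᶠ σ in nhdsWithin (y : ℂ) {(y : ℂ)}ᶜ,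
          plancherelDensityReal p q ρ σ = c / (σ - y) + g σ) ∧
    ((∃ k : ℤ, y = ρ + 2 * k + 1) →
      ∃ c : ℂ, c ≠ 0 ∧ ∃ g : ℂ → ℂ, AnalyticAt ℂ g (y : ℂ) ∧
        ∀ᶠ σ in nhdsWithin (y : ℂ) {(y : ℂ)}ᶜ,
          plancherelDensityReal p q ρ σ = c / (σ - y) + g σ) ∧
    ((∃ k : ℕ, y = ρ + 2 * k) →
      ∃ c₂ c₁ : ℂ, c₂ ≠ 0 ∧ ∃ g : ℂ → ℂ, AnalyticAt ℂ g (y : ℂ) ∧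
        ∀ᶠ σ in nhdsWithin (y : ℂ) {(y : ℂ)}ᶜ,
          plancherelDensityReal p q ρ σ = c₂ / (σ - y) ^ 2 + c₁ / (σ - y) + g σ) := by
  have hρ0 : 0 < ρ := by
    have hp' : (2 : ℝ) ≤ p := by exact_mod_cast hp
    have hq' : (1 : ℝ) ≤ q := by exact_mod_cast hq
    rw [hρ]
    linarith
  exact ⟨fun ⟨k, hyk⟩ hyρ => plancherelDensityReal_simple_pole_of_lt hpe hqo hρ hy hyk hyρ,
    fun ⟨k, hyk⟩ => plancherelDensityReal_simple_pole_of_odd_shift hpe hqo hρ hρ0 hy hyk,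
    fun ⟨k, hyk⟩ => plancherelDensityReal_double_pole_of_even_shift hpe hqo hρ hρ0 hy hyk⟩
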